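/- arXiv:1204.5077 — 4 statements merged into one kernel-verified Lean document; each statement's English description precedes it below -/
import Mathlib

section
/- Let $U$ be a 2-dimensional complex vector space and $p, q \ge 1$ integers. For a linear hyperplane $\wp \subset S^p U$, the following are equivalent: (i) there is a 1-dimensional subspace $\ell \subset U$ with $\wp = \ell \cdot S^{p-1} U$; (ii) the restriction to $\wp \otimes S^q U$ of the multiplication map $\mu\colon S^p U \otimes S^q U \to S^{p+q} U$ is not surjective. -/
/-!
A linear form `ℓ` on `K²` vanishes at some `v ≠ 0`, so `ℓ · S^{p-1} · S^q` lies in the kernel of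
evaluation at `v`, which does not contain `S^{p+q}`.

Conversely, since `S^1 · S^{q-1} = S^q` it suffices to treat `q = 1`. Pick a functional `μ` that
kills `℘ · S^1` but not `S^{p+1}`. The map `ℓ ↦ μ(ℓ · -)` sends the plane `S^1` of linear forms into
the annihilator of the hyperplane `℘ ⊂ S^p`, a line, so some `ℓ ≠ 0` has `ℓ · S^p ⊆ ker μ`; counting
dimensions, `ℓ · S^p = ker μ ∩ S^{p+1} ⊇ ℘ · S^1`. Hence `ℓ` divides `f X₀` and `f X₁` for `f ∈ ℘`.
Being prime and not dividing both `X₀` and `X₁`, it divides `f`, so `℘ ⊆ ℓ · S^{p-1}`, and the two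
have the same dimension.
-/

open Module MvPolynomial

theorem Submodule.finrank_span_singleton_mul {K A : Type*} [Field K] [CommRing A] [IsDomain A]
    [Algebra K A] {a : A} (ha : a ≠ 0) (N : Submodule K A) :
    finrank K (span K {a} * N) = finrank K N := by
  have : span K {a} * N = N.map (LinearMap.mulLeft K a) := by
    ext
    simp [mem_span_singleton_mul]
  rw [this, ← (N.equivMapOfInjective _ (mul_right_injective₀ ha)).finrank_eq]

theorem LinearMap.ker_ne_bot_of_forall_le_ker {K E V : Type*} [Field K] [AddCommGroup E]
    [Module K E] [AddCommGroup V] [Module K V] [FiniteDimensional K E] [FiniteDimensional K V]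
    (B : E →ₗ[K] Module.Dual K V) (W : Submodule K V)
    (hW : finrank K V < finrank K W + finrank K E) (hB : ∀ e, W ≤ ker (B e)) : ker B ≠ ⊥ := by
  have hrange : range B ≤ W.dualAnnihilator := by
    rintro _ ⟨e, rfl⟩
    exact (Submodule.mem_dualAnnihilator _).2 fun w hw => hB e hw
  have h1 := Submodule.finrank_mono hrange
  have h2 := Subspace.finrank_add_finrank_dualAnnihilator_eq W
  have h3 := B.finrank_range_add_finrank_ker
  intro h
  rw [h, finrank_bot] at h3
  omega

namespace MvPolynomial

variable {σ R K : Type*}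

theorem homogeneousSubmodule_mul_eq [CommSemiring R] (m n : ℕ) :
    homogeneousSubmodule σ R m * homogeneousSubmodule σ R n =
      homogeneousSubmodule σ R (m + n) := by
  rw [← homogeneousSubmodule_one_pow (σ := σ) (R := R) (m + n), pow_add,
    homogeneousSubmodule_one_pow, homogeneousSubmodule_one_pow]

instance [Finite σ] [CommSemiring R] (n : ℕ) : Module.Finite R (homogeneousSubmodule σ R n) :=
  Module.Finite.iff_fg.2 (homogeneousSubmodule_fg σ R n)

theorem finrank_homogeneousSubmodule [Fintype σ] [CommRing R] [Nontrivial R] (n : ℕ) :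
    finrank R (homogeneousSubmodule σ R n) = (Fintype.card σ).multichoose n := by
  classical
  have hs : {d : σ →₀ ℕ | d.degree = n} = ↑(Finset.univ.finsuppAntidiag n : Finset (σ →₀ ℕ)) := by
    ext d
    simp [Finsupp.degree_eq_sum]
  rw [homogeneousSubmodule_eq_finsupp_supported, hs, ← Finset.card_univ,
    ← Finset.card_finsuppAntidiag_nat_eq_multichoose]
  exact (finrank_eq_card_basis (basisRestrictSupport R _)).trans (by simp)

theorem IsHomogeneous.homogeneousComponent_add_mul [CommSemiring R] {φ : MvPolynomial σ R}
    {m : ℕ} (hφ : φ.IsHomogeneous m) (k : ℕ) (ψ : MvPolynomial σ R) :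
    homogeneousComponent (m + k) (φ * ψ) = φ * homogeneousComponent k ψ := by
  let := gradedAlgebra (σ := σ) (R := R)
  simpa only [DirectSum.decompose, Equiv.coe_fn_mk, decomposition.decompose'_apply] using
    DirectSum.coe_decompose_mul_add_of_left_mem (𝒜 := homogeneousSubmodule σ R) (b := ψ) (j := k) hφ

theorem IsHomogeneous.of_mul_left [CommRing R] [IsDomain R] {φ ψ : MvPolynomial σ R} {m n : ℕ}
    (hφ : φ.IsHomogeneous m) (hφ0 : φ ≠ 0) (h : (φ * ψ).IsHomogeneous (m + n)) :
    ψ.IsHomogeneous n := by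
  intro d hd
  by_contra hdn
  have hcomp : homogeneousComponent d.degree ψ = 0 := by
    have := hφ.homogeneousComponent_add_mul d.degree ψ
    rw [homogeneousComponent_of_mem h,
      if_neg (by simp [Finsupp.degree_eq_weight_one] at hdn ⊢; omega)] at this
    exact (mul_eq_zero.1 this.symm).resolve_left hφ0
  apply hd
  simpa [coeff_homogeneousComponent] using congrArg (coeff d) hcomp

theorem prime_of_mem_homogeneousSubmodule_one [Field K] {ℓ : MvPolynomial σ K}
    (hℓ : ℓ ∈ homogeneousSubmodule σ K 1) (hℓ0 : ℓ ≠ 0) : Prime ℓ := by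
  refine (irreducible_of_totalDegree_eq_one (hℓ.totalDegree hℓ0) fun x hx => ?_).prime
  refine isUnit_iff_ne_zero.2 fun hx0 => hℓ0 ?_
  ext d
  simpa [hx0] using hx d

theorem mem_span_singleton_mul_of_dvd [CommRing R] [IsDomain R] {ℓ f : MvPolynomial σ R} {n : ℕ}
    (hℓ : ℓ ∈ homogeneousSubmodule σ R 1) (hℓ0 : ℓ ≠ 0)
    (hf : f ∈ homogeneousSubmodule σ R (n + 1)) (hdvd : ℓ ∣ f) :
    f ∈ Submodule.span R {ℓ} * homogeneousSubmodule σ R n := by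
  obtain ⟨g, rfl⟩ := hdvd
  rw [add_comm] at hf
  exact Submodule.mem_span_singleton_mul.2 ⟨g, hℓ.of_mul_left hℓ0 hf, rfl⟩

theorem span_singleton_mul_le_ker_aeval [CommSemiring R] {v : σ → R} {ℓ : MvPolynomial σ R}
    (hℓ : aeval v ℓ = 0) (N : Submodule R (MvPolynomial σ R)) :
    Submodule.span R {ℓ} * N ≤ LinearMap.ker (aeval v).toLinearMap := by
  intro f hf
  obtain ⟨g, -, rfl⟩ := Submodule.mem_span_singleton_mul.1 hf
  change aeval v (ℓ * g) = 0
  rw [map_mul, hℓ, zero_mul]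

theorem homogeneousSubmodule_not_le_ker_aeval [CommSemiring R] [NoZeroDivisors R] {v : σ → R}
    (hv : v ≠ 0) (n : ℕ) :
    ¬ homogeneousSubmodule σ R n ≤ LinearMap.ker (aeval v).toLinearMap := by
  obtain ⟨i, hi⟩ := Function.ne_iff.1 hv
  intro h
  have : aeval v (X i ^ n) = 0 := h (isHomogeneous_X_pow i n)
  rw [map_pow, aeval_X] at this
  exact pow_ne_zero n hi this

variable [Field K]

theorem finrank_homogeneousSubmodule_fin_two (n : ℕ) :
    finrank K (homogeneousSubmodule (Fin 2) K n) = n + 1 := by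
  rw [finrank_homogeneousSubmodule, Fintype.card_fin, Nat.multichoose_two]

theorem exists_ne_zero_aeval_eq_zero {ℓ : MvPolynomial (Fin 2) K}
    (hℓ : ℓ ∈ homogeneousSubmodule (Fin 2) K 1) : ∃ v : Fin 2 → K, v ≠ 0 ∧ aeval v ℓ = 0 := by
  rw [homogeneousSubmodule_one_eq_span_X, Submodule.mem_span_range_iff_exists_fun] at hℓ
  obtain ⟨c, rfl⟩ := hℓ
  by_cases hc : c = 0
  · exact ⟨![1, 0], by simp, by simp [hc]⟩
  refine ⟨![c 1, -c 0], ?_, by simp [Fin.sum_univ_two]; ring⟩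
  contrapose! hc
  ext i
  fin_cases i
  · simpa using congrFun hc 1
  · simpa using congrFun hc 0

theorem dvd_of_forall_dvd_mul_X {ℓ f : MvPolynomial (Fin 2) K}
    (hℓ : ℓ ∈ homogeneousSubmodule (Fin 2) K 1) (hℓ0 : ℓ ≠ 0) (h : ∀ i, ℓ ∣ f * X i) : ℓ ∣ f := by
  by_contra hf
  have hX : ∀ i, ℓ ∣ X i := fun i =>
    ((prime_of_mem_homogeneousSubmodule_one hℓ hℓ0).dvd_or_dvd (h i)).resolve_left hf
  obtain ⟨v, hv0, hv⟩ := exists_ne_zero_aeval_eq_zero hℓ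
  refine hv0 ?_
  ext i
  obtain ⟨g, hg⟩ := hX i
  have := congrArg (aeval v) hg
  rwa [map_mul, hv, zero_mul, aeval_X] at this

theorem span_singleton_mul_homogeneousSubmodule_ne {ℓ : MvPolynomial (Fin 2) K}
    (hℓ : ℓ ∈ homogeneousSubmodule (Fin 2) K 1) (m n : ℕ) :
    Submodule.span K {ℓ} * homogeneousSubmodule (Fin 2) K m * homogeneousSubmodule (Fin 2) K n ≠
      homogeneousSubmodule (Fin 2) K (m + n + 1) := by
  obtain ⟨v, hv0, hv⟩ := exists_ne_zero_aeval_eq_zero hℓ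
  intro h
  apply homogeneousSubmodule_not_le_ker_aeval hv0 (m + n + 1)
  rw [← h, mul_assoc]
  exact span_singleton_mul_le_ker_aeval hv _

theorem exists_span_singleton_mul_le_ker {p : ℕ} {℘ : Submodule K (MvPolynomial (Fin 2) K)}
    (h℘ : ℘ ≤ homogeneousSubmodule (Fin 2) K p) (hdim : p ≤ finrank K ℘)
    {μ : Module.Dual K (MvPolynomial (Fin 2) K)}
    (hμ : ℘ * homogeneousSubmodule (Fin 2) K 1 ≤ LinearMap.ker μ) :
    ∃ ℓ ∈ homogeneousSubmodule (Fin 2) K 1, ℓ ≠ 0 ∧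
      Submodule.span K {ℓ} * homogeneousSubmodule (Fin 2) K p ≤ LinearMap.ker μ := by
  let B := ((LinearMap.mul K _).compl₁₂ (homogeneousSubmodule (Fin 2) K 1).subtype
    (homogeneousSubmodule (Fin 2) K p).subtype).compr₂ μ
  let W := ℘.comap (homogeneousSubmodule (Fin 2) K p).subtype
  have hW : finrank K W = finrank K ℘ := (Submodule.comapSubtypeEquivOfLe h℘).finrank_eq
  have hB : LinearMap.ker B ≠ ⊥ := by
    refine LinearMap.ker_ne_bot_of_forall_le_ker B W ?_ fun ℓ f hf => ?_
    · rw [hW, finrank_homogeneousSubmodule_fin_two, finrank_homogeneousSubmodule_fin_two]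
      omega
    · change μ (ℓ * f) = 0
      rw [mul_comm]
      exact hμ (Submodule.mul_mem_mul hf ℓ.2)
  obtain ⟨ℓ, hℓB, hℓ0⟩ := Submodule.exists_mem_ne_zero_of_ne_bot hB
  refine ⟨ℓ, ℓ.2, by simpa using hℓ0, fun g hg => ?_⟩
  obtain ⟨f, hf, rfl⟩ := Submodule.mem_span_singleton_mul.1 hg
  exact LinearMap.congr_fun hℓB ⟨f, hf⟩

theorem ker_inf_homogeneousSubmodule_le_span_singleton_mul {p : ℕ} {ℓ x : MvPolynomial (Fin 2) K}
    {μ : Module.Dual K (MvPolynomial (Fin 2) K)} (hℓ : ℓ ∈ homogeneousSubmodule (Fin 2) K 1)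
    (hℓ0 : ℓ ≠ 0) (hℓμ : Submodule.span K {ℓ} * homogeneousSubmodule (Fin 2) K p ≤ LinearMap.ker μ)
    (hx : x ∈ homogeneousSubmodule (Fin 2) K (p + 1)) (hμx : μ x ≠ 0) :
    LinearMap.ker μ ⊓ homogeneousSubmodule (Fin 2) K (p + 1) ≤
      Submodule.span K {ℓ} * homogeneousSubmodule (Fin 2) K p := by
  have hle : Submodule.span K {ℓ} * homogeneousSubmodule (Fin 2) K p ≤
      LinearMap.ker μ ⊓ homogeneousSubmodule (Fin 2) K (p + 1) := by
    refine le_inf hℓμ fun f hf => ?_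
    obtain ⟨g, hg, rfl⟩ := Submodule.mem_span_singleton_mul.1 hf
    exact add_comm 1 p ▸ hℓ.mul hg
  have hlt := Submodule.finrank_lt_finrank_of_lt <| lt_of_le_of_ne inf_le_right fun h =>
    hμx (h.ge hx : x ∈ LinearMap.ker μ ⊓ _).1
  refine (Submodule.eq_of_le_of_finrank_le hle ?_).ge
  rw [Submodule.finrank_span_singleton_mul hℓ0, finrank_homogeneousSubmodule_fin_two]
  rw [finrank_homogeneousSubmodule_fin_two] at hlt
  omega

theorem exists_eq_span_singleton_mul_of_mul_ne {p : ℕ} (hp : 1 ≤ p)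
    {℘ : Submodule K (MvPolynomial (Fin 2) K)} (h℘ : ℘ ≤ homogeneousSubmodule (Fin 2) K p)
    (hdim : p ≤ finrank K ℘)
    (hne : ℘ * homogeneousSubmodule (Fin 2) K 1 ≠ homogeneousSubmodule (Fin 2) K (p + 1)) :
    ∃ ℓ ∈ homogeneousSubmodule (Fin 2) K 1, ℓ ≠ 0 ∧
      ℘ = Submodule.span K {ℓ} * homogeneousSubmodule (Fin 2) K (p - 1) := by
  obtain ⟨x, hx, hx℘⟩ := SetLike.exists_of_lt <| lt_of_le_of_ne
    (Submodule.mul_le.2 fun f hf g hg => (h℘ hf).mul hg) hne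
  obtain ⟨μ, hμx, hμ⟩ := Submodule.exists_le_ker_of_notMem hx℘
  obtain ⟨ℓ, hℓ, hℓ0, hℓμ⟩ := exists_span_singleton_mul_le_ker h℘ hdim hμ
  have hker := ker_inf_homogeneousSubmodule_le_span_singleton_mul hℓ hℓ0 hℓμ hx hμx
  have hdvd : ∀ f ∈ ℘, ℓ ∣ f := fun f hf => dvd_of_forall_dvd_mul_X hℓ hℓ0 fun i => by
    have hXi := isHomogeneous_X K i
    obtain ⟨g, -, hg⟩ := Submodule.mem_span_singleton_mul.1
      (hker ⟨hμ (Submodule.mul_mem_mul hf hXi), (h℘ hf).mul hXi⟩)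
    exact ⟨g, hg.symm⟩
  have : Module.Finite K (Submodule.span K {ℓ} * homogeneousSubmodule (Fin 2) K (p - 1)) :=
    Module.Finite.iff_fg.2 ((Submodule.fg_span_singleton ℓ).mul (homogeneousSubmodule_fg _ _ _))
  refine ⟨ℓ, hℓ, hℓ0, Submodule.eq_of_le_of_finrank_le (fun f hf => ?_) ?_⟩
  · exact mem_span_singleton_mul_of_dvd hℓ hℓ0 (Nat.sub_add_cancel hp ▸ h℘ hf) (hdvd f hf)
  · rw [Submodule.finrank_span_singleton_mul hℓ0, finrank_homogeneousSubmodule_fin_two]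
    omega

end MvPolynomial

/-- For a hyperplane `℘ ⊂ SᵖU` (with `U = ℂ²`, symmetric powers modelled by
homogeneous polynomials in two variables), the following are equivalent: `℘ = ℓ · S^{p-1}U`
for some line `ℓ ⊂ U`, iff the multiplication map `℘ ⊗ S^qU → S^{p+q}U` is not surjective. -/
theorem hyperplane_product_line_iff_mul_not_surjective (p q : ℕ) (hp : 1 ≤ p) (hq : 1 ≤ q)
    (℘ : Submodule ℂ (MvPolynomial (Fin 2) ℂ))
    (h℘ : ℘ ≤ homogeneousSubmodule (Fin 2) ℂ p)
    (hdim : Module.finrank ℂ ℘ = p) :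
    (∃ ℓ : MvPolynomial (Fin 2) ℂ, ℓ ∈ homogeneousSubmodule (Fin 2) ℂ 1 ∧ ℓ ≠ 0 ∧
        ℘ = Submodule.span ℂ {ℓ} * homogeneousSubmodule (Fin 2) ℂ (p - 1)) ↔
      ℘ * homogeneousSubmodule (Fin 2) ℂ q ≠ homogeneousSubmodule (Fin 2) ℂ (p + q) := by
  constructor
  · rintro ⟨ℓ, hℓ, -, rfl⟩
    rw [show p + q = p - 1 + q + 1 by omega]
    exact span_singleton_mul_homogeneousSubmodule_ne hℓ (p - 1) q
  · intro hne
    refine exists_eq_span_singleton_mul_of_mul_ne hp h℘ hdim.ge fun h => hne ?_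
    calc ℘ * homogeneousSubmodule (Fin 2) ℂ q
        = ℘ * homogeneousSubmodule (Fin 2) ℂ 1 * homogeneousSubmodule (Fin 2) ℂ (q - 1) := by
          rw [mul_assoc, homogeneousSubmodule_mul_eq, Nat.add_sub_cancel' hq]
      _ = homogeneousSubmodule (Fin 2) ℂ (p + q) := by
          rw [h, homogeneousSubmodule_mul_eq, add_assoc, Nat.add_sub_cancel' hq]
end

section
/- Let $U = \mathbb{C}^2$ and $p, q \ge 1$. Suppose linear automorphisms $\alpha \in GL(S^p U)$, $\beta \in GL(S^q U)$, $\gamma \in GL(S^{p+q} U)$ satisfy $\mu \circ (\alpha \otimes \beta) = \gamma \circ \mu$, where $\mu\colon S^p U \otimes S^q U \to S^{p+q}U$ is the multiplication map. Then there exists $g \in GL(U)$, unique up to a nonzero scalar, such that $S^p g \in \mathbb{C}^*\cdot\alpha$, $S^q g \in \mathbb{C}^*\cdot\beta$, and $S^{p+q} g \in \mathbb{C}^*\cdot\gamma$. -/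
/-!
Put `aᵢ = α(X₀ⁱX₁ᵖ⁻ⁱ)` and `bⱼ = β(X₀ʲX₁^(q-j))`. Both `aᵢ₊₁bⱼ` and `aᵢbⱼ₊₁` are the image
under `γ` of the same monomial, so they agree. Dividing `a₁` and `a₀` by their gcd gives coprime
`s`, `t` with `s aᵢ = t aᵢ₊₁` and `s bⱼ = t bⱼ₊₁`. Hence `tᵖ ∣ a₀`, which forces `s` and `t` to be
linear forms (divisors of homogeneous polynomials are homogeneous; constants are excluded because
`α` is injective), and then `aᵢ = c sⁱtᵖ⁻ⁱ`, `bⱼ = c' sʲt^(q-j)`. The matrix `g` whose rows are the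
coefficients of `s` and `t` is invertible since `s`, `t` are coprime; it induces `c⁻¹α`, `c'⁻¹β`
and, as `S^(p+q) = Sᵖ·S^q`, also `(cc')⁻¹γ`.

Conversely, if `g'` also induces `α` up to a scalar, the image of `X₀ᵖ` shows that the first row
of `g'` is `λ` times that of `g` (a linear form is prime), and the image of `X₀ᵖ⁻¹X₁` then gives
the same for the second row.
-/

open MvPolynomial Matrix

/-- The algebra endomorphism of `ℂ[X₀, X₁]` induced by a `2 × 2` matrix `g`
(the action of `g ∈ GL(U)` on the symmetric algebra of `U = ℂ²`). -/
noncomputable def substMap (g : Matrix (Fin 2) (Fin 2) ℂ) :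
    MvPolynomial (Fin 2) ℂ →ₐ[ℂ] MvPolynomial (Fin 2) ℂ :=
  MvPolynomial.aeval fun i => ∑ j, MvPolynomial.C (g i j) * MvPolynomial.X j

/-- `g` induces (up to a nonzero scalar) the automorphism `α` of the `m`-th symmetric
power `SᵐU`, modelled as the degree-`m` homogeneous component of `ℂ[X₀, X₁]`. -/
def InducesUpToScalar (g : Matrix (Fin 2) (Fin 2) ℂ) (m : ℕ)
    (α : (homogeneousSubmodule (Fin 2) ℂ m) ≃ₗ[ℂ] (homogeneousSubmodule (Fin 2) ℂ m)) :
    Prop :=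
  ∃ c : ℂˣ, ∀ x : homogeneousSubmodule (Fin 2) ℂ m,
    substMap g (x : MvPolynomial (Fin 2) ℂ) = (c : ℂ) • ((α x : MvPolynomial (Fin 2) ℂ))

lemma mul_pow_eq_mul_pow_of_mul_eq_mul {M : Type*} [CommMonoid M] {s t : M} {f : ℕ → M} {n : ℕ}
    (h : ∀ i < n, s * f i = t * f (i + 1)) : ∀ i ≤ n, f i * t ^ i = f 0 * s ^ i := by
  intro i hi
  induction i with
  | zero => simp
  | succ i ih =>
    calc f (i + 1) * t ^ (i + 1) = t * f (i + 1) * t ^ i := by rw [pow_succ]; ac_rfl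
      _ = s * (f i * t ^ i) := by rw [← h i (by omega), mul_assoc]
      _ = f 0 * s ^ (i + 1) := by rw [ih (by omega), pow_succ]; ac_rfl

lemma IsRelPrime.pow_dvd_of_mul_eq_mul {M : Type*} [CommMonoid M] [DecompositionMonoid M]
    {s t : M} {f : ℕ → M} {n : ℕ} (hst : IsRelPrime s t)
    (h : ∀ i < n, s * f i = t * f (i + 1)) : t ^ n ∣ f 0 :=
  hst.symm.pow.dvd_of_dvd_mul_right
    ⟨f n, by rw [← mul_pow_eq_mul_pow_of_mul_eq_mul h n le_rfl, mul_comm]⟩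

namespace MvPolynomial

section

variable {σ R : Type*} [CommRing R]

noncomputable def gradingPoly : MvPolynomial σ R →ₐ[R] Polynomial (MvPolynomial σ R) :=
  aeval fun i => Polynomial.C (X i) * Polynomial.X

lemma gradingPoly_monomial (d : σ →₀ ℕ) (r : R) :
    gradingPoly (monomial d r) = Polynomial.monomial d.degree (monomial d r) := by
  simp only [gradingPoly, aeval_monomial, mul_pow, Finsupp.prod_mul, ← map_pow]
  rw [← map_finsuppProd, Finsupp.prod, Finsupp.prod, Finset.prod_pow_eq_pow_sum,
    ← Finsupp.degree_apply, Polynomial.C_mul_X_pow_eq_monomial, monomial_eq, Finsupp.prod,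
    Polynomial.algebraMap_apply, Polynomial.C_mul_monomial, algebraMap_eq]

lemma coeff_gradingPoly (f : MvPolynomial σ R) (k : ℕ) :
    (gradingPoly f).coeff k = homogeneousComponent k f := by
  conv_lhs => rw [f.as_sum]
  simp only [map_sum, gradingPoly_monomial, Polynomial.finsetSum_coeff, Polynomial.coeff_monomial,
    homogeneousComponent_apply, Finset.sum_filter]

lemma gradingPoly_of_isHomogeneous {f : MvPolynomial σ R} {n : ℕ} (hf : f.IsHomogeneous n) :
    gradingPoly f = Polynomial.monomial n f := by
  ext k : 1
  rw [coeff_gradingPoly, Polynomial.coeff_monomial, homogeneousComponent_of_mem hf]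
  exact if_congr eq_comm rfl rfl

lemma IsHomogeneous.of_mul_left_s4 [IsDomain R] {f g : MvPolynomial σ R} {n : ℕ}
    (hfg : (f * g).IsHomogeneous n) (h0 : f * g ≠ 0) : ∃ m, f.IsHomogeneous m := by
  classical
  set P := gradingPoly f
  have hPQ : P * gradingPoly g = Polynomial.monomial n (f * g) := by
    rw [← map_mul, gradingPoly_of_isHomogeneous hfg]
  have hPQ0 : P * gradingPoly g ≠ 0 := by
    rwa [hPQ, Ne, Polynomial.monomial_eq_zero_iff]
  have hdeg := Polynomial.natDegree_mul (left_ne_zero_of_mul hPQ0) (right_ne_zero_of_mul hPQ0)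
  have htrail :=
    Polynomial.natTrailingDegree_mul (left_ne_zero_of_mul hPQ0) (right_ne_zero_of_mul hPQ0)
  rw [hPQ, Polynomial.natDegree_monomial, if_neg h0] at hdeg
  rw [hPQ, Polynomial.natTrailingDegree_monomial h0] at htrail
  have := P.natTrailingDegree_le_natDegree
  have := (gradingPoly g).natTrailingDegree_le_natDegree
  -- the lowest and highest degrees of `P` coincide, so `f` has a single homogeneous component
  refine ⟨P.natDegree, fun d hd => ?_⟩
  contrapose! hd
  replace hd : d.degree ≠ P.natDegree := by rwa [Finsupp.degree_eq_weight_one]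
  have hPd : P.coeff d.degree = 0 := by
    rcases hd.lt_or_gt with hlt | hgt
    · exact Polynomial.coeff_eq_zero_of_lt_natTrailingDegree (by omega)
    · exact Polynomial.coeff_eq_zero_of_natDegree_lt hgt
  rw [coeff_gradingPoly] at hPd
  simpa [coeff_homogeneousComponent] using congrArg (coeff d) hPd

lemma IsHomogeneous.of_mul_right [IsDomain R] {f g : MvPolynomial σ R} {n : ℕ}
    (hfg : (f * g).IsHomogeneous n) (h0 : f * g ≠ 0) : ∃ m, g.IsHomogeneous m :=
  (mul_comm f g ▸ hfg).of_mul_left_s4 (mul_comm f g ▸ h0)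

lemma exists_eq_C_mul_of_dvd [IsDomain R] {ℓ m : MvPolynomial σ R} (h : ℓ ∣ m)
    (hm : m.totalDegree ≤ ℓ.totalDegree) : ∃ c, m = C c * ℓ := by
  obtain ⟨k, rfl⟩ := h
  rcases eq_or_ne (ℓ * k) 0 with h0 | h0
  · exact ⟨0, by rw [h0, C_0, zero_mul]⟩
  rw [totalDegree_mul_of_isDomain (left_ne_zero_of_mul h0) (right_ne_zero_of_mul h0)] at hm
  exact ⟨coeff 0 k, by rw [← totalDegree_eq_zero_iff_eq_C.1 (by omega), mul_comm]⟩

end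

section

variable {σ R : Type*} [CommSemiring R]

lemma IsHomogeneous.exists_eq_sum_C_mul_X [Fintype σ] {f : MvPolynomial σ R}
    (hf : f.IsHomogeneous 1) : ∃ c : σ → R, f = ∑ i, C (c i) * X i := by
  rw [← mem_homogeneousSubmodule, homogeneousSubmodule_one_eq_span_X,
    Submodule.mem_span_range_iff_exists_fun] at hf
  obtain ⟨c, rfl⟩ := hf
  exact ⟨c, by simp only [smul_eq_C_mul]⟩

lemma X_pow_mul_X_pow_mem (a b : σ) {i n : ℕ} (hi : i ≤ n) :
    X a ^ i * X b ^ (n - i) ∈ homogeneousSubmodule σ R n := by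
  simpa [Nat.add_sub_cancel' hi] using (isHomogeneous_X_pow a i).mul (isHomogeneous_X_pow b (n - i))

lemma homogeneousSubmodule_add_eq_mul (m n : ℕ) :
    homogeneousSubmodule σ R (m + n) = homogeneousSubmodule σ R m * homogeneousSubmodule σ R n := by
  rw [← homogeneousSubmodule_one_pow (σ := σ) (R := R) (m + n), pow_add,
    homogeneousSubmodule_one_pow, homogeneousSubmodule_one_pow]

lemma homogeneousSubmodule_le_span_X_pow_mul_X_pow (n : ℕ) :
    homogeneousSubmodule (Fin 2) R n ≤
      Submodule.span R ((fun i => X 0 ^ i * X 1 ^ (n - i)) '' Set.Iic n) := by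
  rw [homogeneousSubmodule_eq_finsupp_supported, AddMonoidAlgebra.supported_eq_span_single,
    Submodule.span_le]
  rintro _ ⟨d, hd, rfl⟩
  have hd : d 0 + d 1 = n := by simpa [Finsupp.degree_eq_sum, Fin.sum_univ_two] using hd
  refine Submodule.subset_span ⟨d 0, by simp; omega, ?_⟩
  simp [single_eq_monomial, monomial_eq, Finsupp.prod_fintype, Fin.prod_univ_two, ← hd]

lemma eqOn_homogeneousSubmodule_of_eq_X_pow_mul_X_pow {M : Type*} [AddCommMonoid M] [Module R M]
    {φ ψ : MvPolynomial (Fin 2) R →ₗ[R] M} {n : ℕ}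
    (h : ∀ i ≤ n, φ (X 0 ^ i * X 1 ^ (n - i)) = ψ (X 0 ^ i * X 1 ^ (n - i))) :
    Set.EqOn φ ψ (homogeneousSubmodule (Fin 2) R n) :=
  (LinearMap.eqOn_span' (by rintro _ ⟨i, hi, rfl⟩; exact h i hi)).mono
    (homogeneousSubmodule_le_span_X_pow_mul_X_pow n)

lemma eqOn_homogeneousSubmodule_add_of_mul_eq {m n : ℕ}
    {A B G : MvPolynomial σ R →ₗ[R] MvPolynomial σ R} {φ : MvPolynomial σ R →ₐ[R] MvPolynomial σ R}
    {a b : R} (hμ : ∀ f ∈ homogeneousSubmodule σ R m, ∀ h ∈ homogeneousSubmodule σ R n,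
      G (f * h) = A f * B h)
    (hA : Set.EqOn A ⇑(a • φ.toLinearMap) (homogeneousSubmodule σ R m))
    (hB : Set.EqOn B ⇑(b • φ.toLinearMap) (homogeneousSubmodule σ R n)) :
    Set.EqOn G ⇑((a * b) • φ.toLinearMap) (homogeneousSubmodule σ R (m + n)) := by
  have : homogeneousSubmodule σ R m * homogeneousSubmodule σ R n ≤
      LinearMap.eqLocus G ((a * b) • φ.toLinearMap) := Submodule.mul_le.2 fun f hf h hh => by
    simp only [LinearMap.mem_eqLocus, hμ f hf h hh, hA hf, hB hh,
      LinearMap.smul_apply, AlgHom.toLinearMap_apply, map_mul, smul_eq_C_mul]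
    ring
  rw [homogeneousSubmodule_add_eq_mul]
  exact fun f hf => this hf

variable {n : ℕ}

/-- `α`, extended by zero on the other homogeneous components: this lets `α` be applied to
polynomials such as `X 0 ^ i * X 1 ^ (n - i)` without carrying membership proofs. -/
noncomputable def extendByZero (α : homogeneousSubmodule σ R n →ₗ[R] homogeneousSubmodule σ R n) :
    MvPolynomial σ R →ₗ[R] MvPolynomial σ R :=
  (homogeneousSubmodule σ R n).subtype ∘ₗ α ∘ₗ
    (homogeneousComponent n).codRestrict _ (homogeneousComponent_mem n)

lemma extendByZero_of_mem (α : homogeneousSubmodule σ R n →ₗ[R] homogeneousSubmodule σ R n)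
    {f : MvPolynomial σ R} (hf : f ∈ homogeneousSubmodule σ R n) :
    extendByZero α f = α ⟨f, hf⟩ := by
  simp only [extendByZero, LinearMap.comp_apply, Submodule.subtype_apply]
  congr 2
  exact Subtype.ext (by simp [homogeneousComponent_of_mem hf])

lemma isHomogeneous_extendByZero
    (α : homogeneousSubmodule σ R n →ₗ[R] homogeneousSubmodule σ R n) (f : MvPolynomial σ R) :
    (extendByZero α f).IsHomogeneous n :=
  (α _).2

lemma eq_zero_of_extendByZero_eq_zero
    {α : homogeneousSubmodule σ R n →ₗ[R] homogeneousSubmodule σ R n} (hα : Function.Injective α)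
    {f : MvPolynomial σ R} (hf : f ∈ homogeneousSubmodule σ R n) (h : extendByZero α f = 0) :
    f = 0 := by
  rw [extendByZero_of_mem α hf, ZeroMemClass.coe_eq_zero, map_eq_zero_iff α hα] at h
  exact congrArg Subtype.val h

end

section

variable {σ K : Type*} [Field K]

lemma dvd_of_C_mul_add_C_mul_eq_zero {a b : K} {x y : MvPolynomial σ K} (hb : b ≠ 0)
    (h : C a * x + C b * y = 0) : x ∣ y := by
  refine ⟨-(C a * C b⁻¹), ?_⟩
  have hbb : C b⁻¹ * C b = (1 : MvPolynomial σ K) := by rw [← C_mul, inv_mul_cancel₀ hb, C_1]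
  linear_combination C b⁻¹ * h - y * hbb

lemma prime_of_totalDegree_eq_one {ℓ : MvPolynomial σ K} (h : ℓ.totalDegree = 1) : Prime ℓ := by
  refine (irreducible_of_totalDegree_eq_one h fun x hx => isUnit_iff_ne_zero.2 ?_).prime
  rintro rfl
  have : ℓ = 0 := by ext d; simpa using hx d
  simp [this] at h

lemma exists_eq_C_mul_of_pow_eq {ℓ m : MvPolynomial σ K} {p : ℕ} {v : K}
    (hℓ : ℓ.totalDegree = 1) (hm : m.totalDegree ≤ 1) (hp : p ≠ 0) (h : m ^ p = C v * ℓ ^ p) :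
    ∃ c, m = C c * ℓ :=
  exists_eq_C_mul_of_dvd ((prime_of_totalDegree_eq_one hℓ).dvd_of_dvd_pow
    (h ▸ dvd_mul_of_dvd_right (dvd_pow_self ℓ hp) _)) (hℓ ▸ hm)

lemma exists_eq_C_mul_pow_mul_pow {s t : MvPolynomial σ K} {f : ℕ → MvPolynomial σ K} {n : ℕ}
    (hst : IsRelPrime s t) (ht : t.IsHomogeneous 1) (ht0 : t ≠ 0)
    (hf : (f 0).totalDegree ≤ n) (h : ∀ i < n, s * f i = t * f (i + 1)) :
    ∃ c, ∀ i ≤ n, f i = C c * (s ^ i * t ^ (n - i)) := by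
  have htn : (t ^ n).totalDegree = n := by
    simpa using (ht.pow n).totalDegree (pow_ne_zero n ht0)
  obtain ⟨c, hc⟩ := exists_eq_C_mul_of_dvd (hst.pow_dvd_of_mul_eq_mul h) (htn.symm ▸ hf)
  refine ⟨c, fun i hi => mul_right_cancel₀ (pow_ne_zero i ht0) ?_⟩
  rw [mul_pow_eq_mul_pow_of_mul_eq_mul h i hi, hc, ← Nat.sub_add_cancel hi, pow_add,
    Nat.add_sub_cancel]
  ring

lemma isUnit_of_totalDegree_eq_zero {t : MvPolynomial σ K} (ht : t.totalDegree = 0) (ht0 : t ≠ 0) :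
    IsUnit t := by
  refine isUnit_iff_totalDegree_of_isReduced.2 ⟨isUnit_iff_ne_zero.2 fun h => ht0 ?_, ht⟩
  rw [totalDegree_eq_zero_iff_eq_C.1 ht, h, C_0]

theorem exists_linear_forms_of_mul_eq_mul {p q : ℕ} (hp : 1 ≤ p) (hq : 1 ≤ q)
    {a b : ℕ → MvPolynomial σ K} (ha₀ : (a 0).IsHomogeneous p) (ha₁ : (a 1).IsHomogeneous p)
    (hb₀ : (b 0).IsHomogeneous q) (ha₀_ne : a 0 ≠ 0) (hb₀_ne : b 0 ≠ 0)
    (hrel : ∀ i < p, ∀ j < q, a (i + 1) * b j = a i * b (j + 1))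
    (hne : ∀ u : K, a 1 ≠ C u * a 0) :
    ∃ s t : MvPolynomial σ K, s.IsHomogeneous 1 ∧ t.IsHomogeneous 1 ∧ IsRelPrime s t ∧
      ∃ c c' : K, c ≠ 0 ∧ c' ≠ 0 ∧ (∀ i ≤ p, a i = C c * (s ^ i * t ^ (p - i))) ∧
        ∀ j ≤ q, b j = C c' * (s ^ j * t ^ (q - j)) := by
  obtain ⟨t, s, d, hts, hdt, hds⟩ :=
    UniqueFactorizationMonoid.exists_reduced_factors (a 0) ha₀_ne (a 1)
  have ha₁_ne : a 1 ≠ 0 := by simpa using hne 0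
  have hd0 : d ≠ 0 := left_ne_zero_of_mul (hdt ▸ ha₀_ne)
  have ht0 : t ≠ 0 := right_ne_zero_of_mul (hdt ▸ ha₀_ne)
  have hs0 : s ≠ 0 := right_ne_zero_of_mul (hds ▸ ha₁_ne)
  have hb : ∀ j < q, s * b j = t * b (j + 1) := fun j hj => mul_left_cancel₀ hd0 <| by
    rw [← mul_assoc, ← mul_assoc, hds, hdt]; exact hrel 0 (by omega) j hj
  have ha : ∀ i < p, s * a i = t * a (i + 1) := fun i hi => mul_right_cancel₀ hb₀_ne <|
    calc s * a i * b 0 = a i * (s * b 0) := by ring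
      _ = t * (a i * b 1) := by rw [hb 0 (by omega)]; ring
      _ = t * a (i + 1) * b 0 := by rw [← hrel i hi 0 (by omega)]; ring
  -- `s` and `t` are homogeneous of the same degree, at most `1` since `t ^ p ∣ a 0`
  have hst : IsRelPrime s t := hts.symm
  obtain ⟨m, hs⟩ := (hds ▸ ha₁).of_mul_right (hds ▸ ha₁_ne)
  obtain ⟨m', ht⟩ := (hdt ▸ ha₀).of_mul_right (hdt ▸ ha₀_ne)
  have hdeg₀ := ha₀.totalDegree ha₀_ne
  have hdeg₁ := ha₁.totalDegree ha₁_ne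
  rw [← hdt, totalDegree_mul_of_isDomain hd0 ht0, ht.totalDegree ht0] at hdeg₀
  rw [← hds, totalDegree_mul_of_isDomain hd0 hs0, hs.totalDegree hs0] at hdeg₁
  have htp := totalDegree_le_of_dvd_of_isDomain (hst.pow_dvd_of_mul_eq_mul ha) ha₀_ne
  rw [(ht.pow p).totalDegree (pow_ne_zero p ht0), ha₀.totalDegree ha₀_ne] at htp
  obtain rfl : m' = 1 := by
    refine le_antisymm (by nlinarith) (Nat.one_le_iff_ne_zero.2 fun hm' => ?_)
    obtain ⟨u, hu⟩ := exists_eq_C_mul_of_dvd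
      (isUnit_of_totalDegree_eq_zero (hm' ▸ ht.totalDegree ht0) ht0).dvd
      (by rw [hs.totalDegree hs0, ht.totalDegree ht0]; omega)
    exact hne u (by rw [← hds, ← hdt, hu]; ring)
  obtain rfl : m = 1 := by omega
  obtain ⟨c, hc⟩ := exists_eq_C_mul_pow_mul_pow hst ht ht0 ha₀.totalDegree_le ha
  obtain ⟨c', hc'⟩ := exists_eq_C_mul_pow_mul_pow hst ht ht0 hb₀.totalDegree_le hb
  refine ⟨s, t, hs, ht, hst, c, c', ?_, ?_, hc, hc'⟩
  · rintro rfl; simp [hc 0 (Nat.zero_le p)] at ha₀_ne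
  · rintro rfl; simp [hc' 0 (Nat.zero_le q)] at hb₀_ne

theorem exists_linear_forms_of_map_mul {p q : ℕ} (hp : 1 ≤ p) (hq : 1 ≤ q)
    {A B G : MvPolynomial (Fin 2) K →ₗ[K] MvPolynomial (Fin 2) K}
    (hA : ∀ f, (A f).IsHomogeneous p) (hB : ∀ f, (B f).IsHomogeneous q)
    (hA0 : ∀ f ∈ homogeneousSubmodule (Fin 2) K p, A f = 0 → f = 0)
    (hB0 : ∀ f ∈ homogeneousSubmodule (Fin 2) K q, B f = 0 → f = 0)
    (hμ : ∀ f ∈ homogeneousSubmodule (Fin 2) K p, ∀ h ∈ homogeneousSubmodule (Fin 2) K q,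
      G (f * h) = A f * B h) :
    ∃ s t : MvPolynomial (Fin 2) K, s.IsHomogeneous 1 ∧ t.IsHomogeneous 1 ∧ IsRelPrime s t ∧
      ∃ c c' : K, c ≠ 0 ∧ c' ≠ 0 ∧
        (∀ i ≤ p, A (X 0 ^ i * X 1 ^ (p - i)) = C c * (s ^ i * t ^ (p - i))) ∧
        ∀ j ≤ q, B (X 0 ^ j * X 1 ^ (q - j)) = C c' * (s ^ j * t ^ (q - j)) := by
  have hmono (i n : ℕ) : (X 0 ^ i * X 1 ^ (n - i) : MvPolynomial (Fin 2) K) ≠ 0 :=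
    mul_ne_zero (pow_ne_zero _ (X_ne_zero _)) (pow_ne_zero _ (X_ne_zero _))
  have hmem {i n : ℕ} (hi : i ≤ n) := X_pow_mul_X_pow_mem (σ := Fin 2) (R := K) 0 1 hi
  refine exists_linear_forms_of_mul_eq_mul hp hq (hA _) (hA _) (hB _)
    (fun h => hmono 0 p (hA0 _ (hmem (Nat.zero_le p)) h))
    (fun h => hmono 0 q (hB0 _ (hmem (Nat.zero_le q)) h)) (fun i hi j hj => ?_) (fun u hu => ?_)
  · rw [← hμ _ (hmem hi) _ (hmem hj.le), ← hμ _ (hmem hi.le) _ (hmem hj)]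
    obtain ⟨p', rfl⟩ := Nat.exists_eq_add_of_lt hi
    obtain ⟨q', rfl⟩ := Nat.exists_eq_add_of_lt hj
    rw [show i + p' + 1 - (i + 1) = p' by omega, show i + p' + 1 - i = p' + 1 by omega,
      show j + q' + 1 - (j + 1) = q' by omega, show j + q' + 1 - j = q' + 1 by omega]
    simp only [pow_succ]
    congr 1
    ring
  · obtain ⟨k, rfl⟩ := Nat.exists_eq_add_of_le' hp
    have hmem' := ((hmem (Nat.le_add_left 1 k)).sub ((hmem (Nat.zero_le (k + 1))).C_mul u))
    have h := hA0 _ hmem' <| by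
      rw [map_sub, ← smul_eq_C_mul, map_smul, smul_eq_C_mul, hu, sub_self]
    have hfac : X 1 ^ k * (X 0 - C u * X 1) = (0 : MvPolynomial (Fin 2) K) := by
      rw [← h]; simp only [Nat.add_sub_cancel, pow_one, pow_zero, one_mul, Nat.sub_zero]; ring
    rcases mul_eq_zero.1 hfac with h | h
    · exact pow_ne_zero k (X_ne_zero 1) h
    · simpa using congrArg (eval ![1, 0]) h

end

end MvPolynomial

lemma substMap_X (g : Matrix (Fin 2) (Fin 2) ℂ) (i : Fin 2) :
    substMap g (X i) = ∑ j, C (g i j) * X j :=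
  aeval_X _ _

lemma isHomogeneous_substMap_X (g : Matrix (Fin 2) (Fin 2) ℂ) (i : Fin 2) :
    (substMap g (X i)).IsHomogeneous 1 := by
  rw [substMap_X]
  exact IsHomogeneous.sum _ _ _ fun j _ => isHomogeneous_C_mul_X _ _

lemma coeff_substMap_X (g : Matrix (Fin 2) (Fin 2) ℂ) (i j : Fin 2) :
    coeff (Finsupp.single j 1) (substMap g (X i)) = g i j := by
  fin_cases j <;> simp [substMap_X, coeff_C_mul, coeff_X, Finsupp.single_left_inj]

lemma eq_smul_of_substMap_X_eq {g g' : Matrix (Fin 2) (Fin 2) ℂ} {c : ℂ}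
    (h : ∀ i, substMap g' (X i) = C c * substMap g (X i)) : g' = c • g := by
  ext i j
  simpa [coeff_substMap_X, coeff_C_mul] using congrArg (coeff (Finsupp.single j 1)) (h i)

lemma exists_substMap_X_eq (ℓ : Fin 2 → MvPolynomial (Fin 2) ℂ)
    (hℓ : ∀ i, (ℓ i).IsHomogeneous 1) : ∃ g, ∀ i, substMap g (X i) = ℓ i := by
  choose c hc using fun i => (hℓ i).exists_eq_sum_C_mul_X
  exact ⟨Matrix.of c, fun i => by rw [substMap_X, hc i]; rfl⟩

lemma not_isUnit_substMap_X (g : Matrix (Fin 2) (Fin 2) ℂ) (i : Fin 2) :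
    ¬IsUnit (substMap g (X i)) := by
  intro hu
  rcases eq_or_ne (substMap g (X i)) 0 with h0 | h0
  · exact not_isUnit_zero (h0 ▸ hu)
  · have := (isHomogeneous_substMap_X g i).totalDegree h0
    simp [(isUnit_iff_totalDegree_of_isReduced.1 hu).2] at this

lemma det_ne_zero_of_isRelPrime {g : Matrix (Fin 2) (Fin 2) ℂ}
    (h : IsRelPrime (substMap g (X 0)) (substMap g (X 1))) : g.det ≠ 0 := by
  intro hdet
  obtain ⟨w, hw0, hw⟩ := Matrix.exists_vecMul_eq_zero_iff.2 hdet
  have hcomb : C (w 0) * substMap g (X 0) + C (w 1) * substMap g (X 1) = 0 := by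
    have h0 := congrArg (C : ℂ →+* MvPolynomial (Fin 2) ℂ) (congrFun hw 0)
    have h1 := congrArg (C : ℂ →+* MvPolynomial (Fin 2) ℂ) (congrFun hw 1)
    simp only [Matrix.vecMul, dotProduct, Fin.sum_univ_two, map_add, map_mul, Pi.zero_apply,
      map_zero] at h0 h1
    simp only [substMap_X, Fin.sum_univ_two]
    linear_combination X 0 * h0 + X 1 * h1
  -- a linear relation between the rows makes one row's linear form divide the other's
  by_cases hw1 : w 1 = 0
  · have hw0' : w 0 ≠ 0 := fun h0 => hw0 (funext (Fin.forall_fin_two.2 ⟨h0, hw1⟩))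
    exact not_isUnit_substMap_X g 1 <| h.symm.isUnit_of_dvd <|
      dvd_of_C_mul_add_C_mul_eq_zero (a := w 1) hw0' (by linear_combination hcomb)
  · exact not_isUnit_substMap_X g 0 (h.isUnit_of_dvd (dvd_of_C_mul_add_C_mul_eq_zero hw1 hcomb))

lemma inducesUpToScalar_of_eqOn {g : Matrix (Fin 2) (Fin 2) ℂ} {n : ℕ}
    {α : homogeneousSubmodule (Fin 2) ℂ n ≃ₗ[ℂ] homogeneousSubmodule (Fin 2) ℂ n} {c : ℂ}
    (hc : c ≠ 0) (h : Set.EqOn (extendByZero α.toLinearMap) ⇑(c • (substMap g).toLinearMap)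
      (homogeneousSubmodule (Fin 2) ℂ n)) :
    InducesUpToScalar g n α := by
  refine ⟨(Units.mk0 c hc)⁻¹, fun x => ?_⟩
  have hx := h x.2
  rw [extendByZero_of_mem _ x.2] at hx
  simp only [LinearEquiv.coe_coe, Subtype.coe_eta, LinearMap.smul_apply,
    AlgHom.toLinearMap_apply] at hx
  rw [hx, smul_smul, Units.val_inv_eq_inv_val, Units.val_mk0, inv_mul_cancel₀ hc, one_smul]

theorem InducesUpToScalar.exists_eq_smul {g g' : Matrix (Fin 2) (Fin 2) ℂ} {p : ℕ}
    {α : homogeneousSubmodule (Fin 2) ℂ p ≃ₗ[ℂ] homogeneousSubmodule (Fin 2) ℂ p} (hp : 1 ≤ p)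
    (hg : InducesUpToScalar g p α) (hg' : InducesUpToScalar g' p α) :
    ∃ c : ℂˣ, g' = (c : ℂ) • g := by
  obtain ⟨u, hu⟩ := hg
  obtain ⟨u', hu'⟩ := hg'
  obtain ⟨k, rfl⟩ := Nat.exists_eq_add_of_le' hp
  set v : ℂˣ := u' * u⁻¹
  have h : ∀ f ∈ homogeneousSubmodule (Fin 2) ℂ (k + 1),
      substMap g' f = C (v : ℂ) * substMap g f := by
    intro f hf
    rw [← smul_eq_C_mul, hu' ⟨f, hf⟩, hu ⟨f, hf⟩, smul_smul]
    simp [v]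
  have hX0 : substMap g (X 0) ≠ 0 := by
    intro h0
    have hx := hu ⟨X 0 ^ (k + 1), isHomogeneous_X_pow 0 (k + 1)⟩
    rw [map_pow, h0, zero_pow (Nat.succ_ne_zero k), eq_comm, smul_eq_zero_iff_right u.ne_zero,
      ZeroMemClass.coe_eq_zero, LinearEquiv.map_eq_zero_iff] at hx
    exact pow_ne_zero _ (X_ne_zero 0) (congrArg Subtype.val hx)
  have hpow := h _ (isHomogeneous_X_pow 0 (k + 1))
  have hmix := h (X 0 ^ k * X 1) ((isHomogeneous_X_pow 0 k).mul (isHomogeneous_X ℂ 1))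
  simp only [map_pow, map_mul] at hpow hmix
  obtain ⟨c, hc⟩ := exists_eq_C_mul_of_pow_eq ((isHomogeneous_substMap_X g 0).totalDegree hX0)
    (isHomogeneous_substMap_X g' 0).totalDegree_le (Nat.succ_ne_zero k) hpow
  have hcv : (C (c ^ (k + 1)) : MvPolynomial (Fin 2) ℂ) = C (v : ℂ) := by
    refine mul_right_cancel₀ (pow_ne_zero (k + 1) hX0) ?_
    rw [map_pow, ← mul_pow, ← hc, hpow]
  have hc0 : c ≠ 0 := by
    rintro rfl
    rw [zero_pow (Nat.succ_ne_zero k), C_0, eq_comm, C_eq_zero] at hcv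
    exact v.ne_zero hcv
  rw [hc] at hmix
  have hX1 : substMap g' (X 1) = C c * substMap g (X 1) := by
    refine mul_left_cancel₀ (pow_ne_zero k (mul_ne_zero (C_ne_zero.2 hc0) hX0)) ?_
    rw [hmix, ← hcv, map_pow]
    ring
  exact ⟨Units.mk0 c hc0, eq_smul_of_substMap_X_eq (Fin.forall_fin_two.2 ⟨hc, hX1⟩)⟩

/-- If automorphisms `α` of `SᵖU`, `β` of `SᵠU`, `γ` of `S^{p+q}U` satisfy
`μ ∘ (α ⊗ β) = γ ∘ μ` for the multiplication map `μ : SᵖU ⊗ SᵠU → S^{p+q}U`, then there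
is `g ∈ GL(U)`, unique up to a nonzero scalar, with `Sᵖg ∈ ℂ*·α`, `Sᵠg ∈ ℂ*·β`,
`S^{p+q}g ∈ ℂ*·γ`. -/
theorem exists_gl2_inducing_up_to_scalar (p q : ℕ) (hp : 1 ≤ p) (hq : 1 ≤ q)
    (α : (homogeneousSubmodule (Fin 2) ℂ p) ≃ₗ[ℂ] (homogeneousSubmodule (Fin 2) ℂ p))
    (β : (homogeneousSubmodule (Fin 2) ℂ q) ≃ₗ[ℂ] (homogeneousSubmodule (Fin 2) ℂ q))
    (γ : (homogeneousSubmodule (Fin 2) ℂ (p + q)) ≃ₗ[ℂ]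
      (homogeneousSubmodule (Fin 2) ℂ (p + q)))
    (hμ : ∀ (x : homogeneousSubmodule (Fin 2) ℂ p) (y : homogeneousSubmodule (Fin 2) ℂ q),
      ((γ ⟨(x : MvPolynomial (Fin 2) ℂ) * (y : MvPolynomial (Fin 2) ℂ),
          homogeneousSubmodule_mul p q (Submodule.mul_mem_mul x.2 y.2)⟩ :
        homogeneousSubmodule (Fin 2) ℂ (p + q)) : MvPolynomial (Fin 2) ℂ) =
        (α x : MvPolynomial (Fin 2) ℂ) * (β y : MvPolynomial (Fin 2) ℂ)) :
    ∃ g : GL (Fin 2) ℂ,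
      (InducesUpToScalar (g : Matrix (Fin 2) (Fin 2) ℂ) p α ∧
        InducesUpToScalar (g : Matrix (Fin 2) (Fin 2) ℂ) q β ∧
        InducesUpToScalar (g : Matrix (Fin 2) (Fin 2) ℂ) (p + q) γ) ∧
      ∀ g' : GL (Fin 2) ℂ,
        (InducesUpToScalar (g' : Matrix (Fin 2) (Fin 2) ℂ) p α ∧
          InducesUpToScalar (g' : Matrix (Fin 2) (Fin 2) ℂ) q β ∧
          InducesUpToScalar (g' : Matrix (Fin 2) (Fin 2) ℂ) (p + q) γ) →
        ∃ c : ℂˣ, (g' : Matrix (Fin 2) (Fin 2) ℂ) = (c : ℂ) • (g : Matrix (Fin 2) (Fin 2) ℂ) := by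
  have hμ' : ∀ f ∈ homogeneousSubmodule (Fin 2) ℂ p, ∀ h ∈ homogeneousSubmodule (Fin 2) ℂ q,
      extendByZero γ.toLinearMap (f * h) =
        extendByZero α.toLinearMap f * extendByZero β.toLinearMap h := fun f hf h hh => by
    rw [extendByZero_of_mem _ hf, extendByZero_of_mem _ hh,
      extendByZero_of_mem _ (homogeneousSubmodule_mul p q (Submodule.mul_mem_mul hf hh))]
    exact hμ ⟨f, hf⟩ ⟨h, hh⟩
  obtain ⟨s, t, hs, ht, hst, c, c', hc, hc', hαX, hβX⟩ := exists_linear_forms_of_map_mul hp hq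
    (isHomogeneous_extendByZero _) (isHomogeneous_extendByZero _)
    (fun _ => eq_zero_of_extendByZero_eq_zero α.injective)
    (fun _ => eq_zero_of_extendByZero_eq_zero β.injective) hμ'
  obtain ⟨g, hg⟩ := exists_substMap_X_eq ![s, t] (Fin.forall_fin_two.2 ⟨hs, ht⟩)
  have hα : Set.EqOn (extendByZero α.toLinearMap) ⇑(c • (substMap g).toLinearMap)
      (homogeneousSubmodule (Fin 2) ℂ p) :=
    eqOn_homogeneousSubmodule_of_eq_X_pow_mul_X_pow fun i hi => by
      simp [hαX i hi, hg, smul_eq_C_mul]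
  have hβ : Set.EqOn (extendByZero β.toLinearMap) ⇑(c' • (substMap g).toLinearMap)
      (homogeneousSubmodule (Fin 2) ℂ q) :=
    eqOn_homogeneousSubmodule_of_eq_X_pow_mul_X_pow fun j hj => by
      simp [hβX j hj, hg, smul_eq_C_mul]
  have hgα := inducesUpToScalar_of_eqOn hc hα
  refine ⟨.mkOfDetNeZero g (det_ne_zero_of_isRelPrime (by simpa [hg] using hst)),
    ⟨hgα, inducesUpToScalar_of_eqOn hc' hβ, inducesUpToScalar_of_eqOn (mul_ne_zero hc hc')
      (eqOn_homogeneousSubmodule_add_of_mul_eq hμ' hα hβ)⟩,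
    fun g' hg' => hgα.exists_eq_smul hp hg'.1⟩
end

section
/- Let $E$, $F$ be finite dimensional complex vector spaces, $\phi\colon F \to F^*$ a symplectic (nondegenerate antisymmetric) form, and let $S$ be the isometry group of $(F,\phi)$. Then the map $\kappa\colon \mathrm{Hom}(E,F) \to \mathrm{Hom}_{AS}(E, E^*)$, $f \mapsto f^* \circ \phi \circ f$, is $S$-invariant, takes values in antisymmetric homomorphisms, and its image is exactly the set of antisymmetric homomorphisms $E \to E^*$ of rank at most $\min\{\dim E, \dim F\}$. -/
/-- The map `κ : Hom(E, F) → Hom(E, E^*)`, `f ↦ f^* ∘ φ ∘ f`. -/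
noncomputable def kappaMap {E F : Type*} [AddCommGroup E] [Module ℂ E]
    [AddCommGroup F] [Module ℂ F]
    (φ : F →ₗ[ℂ] Module.Dual ℂ F) (f : E →ₗ[ℂ] F) : E →ₗ[ℂ] Module.Dual ℂ E :=
  f.dualMap ∘ₗ φ ∘ₗ f

/-!
Invariance and antisymmetry of `κ` are immediate, and `κ(f)` factors through `F`, so its rank is
at most `min (dim E) (dim F)`. For the converse, take an alternating `ψ ≠ 0` with
`rank ψ ≤ dim F`, and hyperbolic pairs `ψ x y = 1` in `E` and `φ a b = 1` in `F`. Splitting off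
the planes they span leaves orthogonal complements on which `ψ` has rank two less and `φ` is still
nondegenerate on a space of dimension two less, so by induction there is an isometry `g` between
the complements; then `f = ψ x (·) • b - ψ y (·) • a + g ∘ π`, with `π` the projection onto the
complement, satisfies `κ(f) = ψ`.
-/

open Module LinearMap
open LinearMap (BilinForm)

namespace LinearMap.BilinForm

variable {K V W : Type*} [Field K] [AddCommGroup V] [Module K V] [AddCommGroup W] [Module K W]

theorem exists_apply_eq_one_of_ne_zero {B : BilinForm K V} (hB : B ≠ 0) : ∃ x y, B x y = 1 := by
  obtain ⟨x, hx⟩ := DFunLike.ne_iff.mp hB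
  obtain ⟨y, hy⟩ := DFunLike.ne_iff.mp hx
  exact ⟨x, (B x y)⁻¹ • y, by simpa using inv_mul_cancel₀ hy⟩

section HyperbolicPair

variable {B : BilinForm K V} {x y : V}

variable (B x y) in
def hyperbolicCompl : Submodule K V := ker (B x) ⊓ ker (B y)

theorem mem_hyperbolicCompl {z : V} : z ∈ B.hyperbolicCompl x y ↔ B x z = 0 ∧ B y z = 0 :=
  Iff.rfl

theorem ker_le_hyperbolicCompl (hB : B.IsAlt) : ker B ≤ B.hyperbolicCompl x y := fun z hz => by
  rw [mem_hyperbolicCompl, ← hB.neg_eq z, ← hB.neg_eq z, mem_ker.mp hz]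
  simp

def hyperbolicProj (hB : B.IsAlt) (hxy : B x y = 1) : V →ₗ[K] B.hyperbolicCompl x y :=
  codRestrict _ (id - (B x).smulRight y + (B y).smulRight x) fun z => by
    have hyx : B y x = -1 := by rw [← hB.neg_eq, hxy]
    constructor <;> simp [hxy, hyx, hB.self_eq_zero]

theorem coe_hyperbolicProj (hB : B.IsAlt) (hxy : B x y = 1) (z : V) :
    (hyperbolicProj hB hxy z : V) = z - B x z • y + B y z • x :=
  rfl

theorem apply_hyperbolicProj (hB : B.IsAlt) (hxy : B x y = 1) (u v : V) :
    B (hyperbolicProj hB hxy u) (hyperbolicProj hB hxy v) =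
      B u v - B x u * B y v + B y u * B x v := by
  have hyx : B y x = -1 := by rw [← hB.neg_eq, hxy]
  simp only [coe_hyperbolicProj, map_add, map_sub, map_smul, LinearMap.add_apply,
    LinearMap.sub_apply, LinearMap.smul_apply, smul_eq_mul, hxy, hyx, hB.self_eq_zero,
    ← hB.neg_eq x u, ← hB.neg_eq y u]
  ring

theorem apply_eq_zero_of_mem_hyperbolicCompl (hB : B.IsAlt) (hxy : B x y = 1) {w : V}
    (hw : w ∈ B.hyperbolicCompl x y) (h : ∀ w' ∈ B.hyperbolicCompl x y, B w w' = 0) : B w = 0 := by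
  ext z
  have hwx : B w x = 0 := by rw [← hB.neg_eq, hw.1, neg_zero]
  have hwy : B w y = 0 := by rw [← hB.neg_eq, hw.2, neg_zero]
  have := h _ (hyperbolicProj hB hxy z).2
  simpa [coe_hyperbolicProj, hwx, hwy] using this

theorem ker_restrict_hyperbolicCompl (hB : B.IsAlt) (hxy : B x y = 1) :
    ker (B.restrict (B.hyperbolicCompl x y)) =
      (ker B).comap (B.hyperbolicCompl x y).subtype := by
  ext w
  simp only [mem_ker, Submodule.mem_comap, Submodule.coe_subtype]
  refine ⟨fun h => apply_eq_zero_of_mem_hyperbolicCompl hB hxy w.2 fun w' hw' => ?_, fun h => ?_⟩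
  · exact DFunLike.congr_fun h ⟨w', hw'⟩
  · ext w'
    simp [h]

theorem nondegenerate_restrict_hyperbolicCompl (hB : B.IsAlt) (hxy : B x y = 1)
    (hnd : B.Nondegenerate) : (B.restrict (B.hyperbolicCompl x y)).Nondegenerate := by
  have hB' : (B.restrict (B.hyperbolicCompl x y)).IsAlt := fun w => hB w
  refine (LinearMap.IsRefl.nondegenerate_iff_separatingLeft hB'.isRefl).mpr ?_
  rw [separatingLeft_iff_ker_eq_bot,
    ker_restrict_hyperbolicCompl hB hxy, separatingLeft_iff_ker_eq_bot.mp hnd.1,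
    Submodule.comap_bot, Submodule.ker_subtype]

variable [FiniteDimensional K V]

theorem finrank_hyperbolicCompl_add_two (hB : B.IsAlt) (hxy : B x y = 1) :
    finrank K (B.hyperbolicCompl x y) + 2 = finrank K V := by
  have hsurj : Function.Surjective ((B x).prod (B y)) := fun ⟨s, t⟩ =>
    ⟨s • y - t • x, by simp [hxy, ← hB.neg_eq x y, hB.self_eq_zero]⟩
  have := finrank_range_add_finrank_ker ((B x).prod (B y))
  rw [range_eq_top.mpr hsurj, finrank_top, ker_prod, finrank_prod, finrank_self] at this
  rw [hyperbolicCompl]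
  omega

theorem finrank_range_restrict_hyperbolicCompl_add_two (hB : B.IsAlt) (hxy : B x y = 1) :
    finrank K (range (B.restrict (B.hyperbolicCompl x y))) + 2 = finrank K (range B) := by
  have hker : finrank K (ker (B.restrict (B.hyperbolicCompl x y))) = finrank K (ker B) := by
    rw [ker_restrict_hyperbolicCompl hB hxy]
    exact (Submodule.comapSubtypeEquivOfLe (ker_le_hyperbolicCompl hB)).finrank_eq
  have := finrank_range_add_finrank_ker (B.restrict (B.hyperbolicCompl x y))
  have := finrank_range_add_finrank_ker B
  have := finrank_hyperbolicCompl_add_two hB hxy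
  omega

end HyperbolicPair

theorem exists_compl₁₂_eq_of_restrict_hyperbolicCompl {B : BilinForm K V} {C : BilinForm K W}
    {x y : V} {a b : W} (hB : B.IsAlt) (hC : C.IsAlt) (hxy : B x y = 1) (hab : C a b = 1)
    (g : B.hyperbolicCompl x y →ₗ[K] C.hyperbolicCompl a b)
    (hg : (C.restrict _).compl₁₂ g g = B.restrict _) :
    ∃ f : V →ₗ[K] W, C.compl₁₂ f f = B := by
  let π := hyperbolicProj hB hxy
  refine ⟨(B x).smulRight b - (B y).smulRight a + (C.hyperbolicCompl a b).subtype ∘ₗ g ∘ₗ π, ?_⟩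
  ext u v
  have hba : C b a = -1 := by rw [← hC.neg_eq, hab]
  have hga (w) : C (g w) a = 0 := by rw [← hC.neg_eq, (g w).2.1, neg_zero]
  have hgb (w) : C (g w) b = 0 := by rw [← hC.neg_eq, (g w).2.2, neg_zero]
  have hag (w) : C a (g w) = 0 := (g w).2.1
  have hbg (w) : C b (g w) = 0 := (g w).2.2
  have hgg : C (g (π u)) (g (π v)) = B u v - B x u * B y v + B y u * B x v :=
    congr($hg (π u) (π v)).trans (apply_hyperbolicProj hB hxy u v)
  simp only [compl₁₂_apply, LinearMap.add_apply, LinearMap.sub_apply, smulRight_apply,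
    LinearMap.comp_apply, Submodule.coe_subtype, map_add, map_sub, map_smul, LinearMap.smul_apply,
    smul_eq_mul, hab, hba, hga, hgb, hag, hbg, hC.self_eq_zero, hgg]
  ring

theorem exists_compl₁₂_eq_of_finrank_range_le [FiniteDimensional K V] [FiniteDimensional K W]
    {B : BilinForm K V} {C : BilinForm K W} (hB : B.IsAlt) (hC : C.IsAlt)
    (hCnd : C.Nondegenerate) (hrank : finrank K (range B) ≤ finrank K W) :
    ∃ f : V →ₗ[K] W, C.compl₁₂ f f = B := by
  induction hn : finrank K V using Nat.strong_induction_on generalizing V W with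
  | _ n ih =>
  rcases eq_or_ne B 0 with rfl | hB0
  · exact ⟨0, by ext; simp⟩
  obtain ⟨x, y, hxy⟩ := exists_apply_eq_one_of_ne_zero hB0
  have hrangeB := finrank_range_restrict_hyperbolicCompl_add_two hB hxy
  have : Nontrivial W := (Module.finrank_pos_iff (R := K)).mp (by omega)
  obtain ⟨a, b, hab⟩ := exists_apply_eq_one_of_ne_zero hCnd.ne_zero
  have hV := finrank_hyperbolicCompl_add_two hB hxy
  have hW := finrank_hyperbolicCompl_add_two hC hab
  obtain ⟨g, hg⟩ := ih _ (by omega) (B := B.restrict (B.hyperbolicCompl x y))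
    (C := C.restrict (C.hyperbolicCompl a b)) (fun w => hB w) (fun w => hC w)
    (nondegenerate_restrict_hyperbolicCompl hC hab hCnd) (by omega) rfl
  exact exists_compl₁₂_eq_of_restrict_hyperbolicCompl hB hC hxy hab g hg

end LinearMap.BilinForm

/-- first fundamental theorem of invariant theory for symplectic groups:
For finite dimensional complex vector spaces `E`, `F` and a symplectic form
`φ : F → F^*`, the map `κ : f ↦ f^* ∘ φ ∘ f` is invariant under the isometry group of
`(F, φ)`, takes values in antisymmetric homomorphisms `E → E^*`, and its image is
exactly the set of antisymmetric homomorphisms of rank at most `min(dim E, dim F)`. -/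
theorem symplectic_fft (E F : Type*) [AddCommGroup E] [Module ℂ E]
    [AddCommGroup F] [Module ℂ F] [FiniteDimensional ℂ E] [FiniteDimensional ℂ F]
    (φ : F →ₗ[ℂ] Module.Dual ℂ F)
    (hanti : ∀ x y : F, φ x y = - φ y x)
    (hnondeg : Function.Bijective φ) :
    (∀ s : F ≃ₗ[ℂ] F, (∀ x y : F, φ (s x) (s y) = φ x y) →
      ∀ f : E →ₗ[ℂ] F, kappaMap φ ((s : F →ₗ[ℂ] F) ∘ₗ f) = kappaMap φ f) ∧
    (∀ (f : E →ₗ[ℂ] F) (x y : E), kappaMap φ f x y = - kappaMap φ f y x) ∧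
    (∀ ψ : E →ₗ[ℂ] Module.Dual ℂ E, (∀ x y : E, ψ x y = - ψ y x) →
      ((∃ f : E →ₗ[ℂ] F, kappaMap φ f = ψ) ↔
        Module.finrank ℂ (LinearMap.range ψ) ≤
          min (Module.finrank ℂ E) (Module.finrank ℂ F))) := by
  refine ⟨fun s hs f => ?_, fun f x y => hanti (f x) (f y), fun ψ hψ => ⟨?_, fun hr => ?_⟩⟩
  · ext x y
    exact hs (f x) (f y)
  · rintro ⟨f, rfl⟩
    exact le_min (finrank_range_le _)
      ((Submodule.finrank_mono (range_comp_le_range f (f.dualMap ∘ₗ φ))).trans (finrank_range_le _))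
  · have hφ : (φ : BilinForm ℂ F).IsAlt := fun x => self_eq_neg.mp (hanti x x)
    have hφnd : (φ : BilinForm ℂ F).Nondegenerate :=
      (LinearMap.IsRefl.nondegenerate_iff_separatingLeft hφ.isRefl).mpr
        (separatingLeft_iff_ker_eq_bot.mpr (ker_eq_bot.mpr hnondeg.1))
    obtain ⟨f, hf⟩ := BilinForm.exists_compl₁₂_eq_of_finrank_range_le
      (fun x => self_eq_neg.mp (hψ x x)) hφ hφnd (hr.trans (min_le_right _ _))
    exact ⟨f, by ext x y; exact congr($hf x y)⟩
end

section
/- Let $k \ge 2$, let $a$ be a $k \times (n+k)$ complex matrix all of whose $k\times k$ minors are nonzero, and set $D_i = \mathrm{diag}(0,\dots,0,1,0,\dots,0,1,\dots,1)$, the $(n+k)\times(n+k)$ diagonal matrix with $1$ in position $i$ and in positions $n+2,\dots,n+k$, for $i=1,\dots,n+1$. Then the only tuple $(b_1,\dots,b_{n+1})$ of vectors in $\mathbb{C}^{n+k}$ satisfying $a D_i b_i = 0$ for all $i$ and $a(D_{i_1} b_{i_2} + D_{i_2} b_{i_1}) = 0$ for all $1 \le i_1 < i_2 \le n+1$ is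 the zero tuple. -/
/-!
`D i` is the coordinate projection onto `{i} ∪ T`, where `T` is the set of the last `k - 1`
coordinates. If every `k × k` minor of `a` is nonzero, a vector in the kernel of `a` supported on
at most `k` coordinates vanishes. Hence `a (D i bᵢ) = 0` forces `bᵢ` to vanish on `{i} ∪ T`.
Then `D i₁ b_{i₂} + D i₂ b_{i₁}` vanishes on `T`, so it is supported on `{i₁, i₂}` and vanishes
as well; its `i₁`-entry is `b_{i₂} i₁` and its `i₂`-entry is `b_{i₁} i₂`.
-/

open Matrix Finset Function

namespace Matrix

variable {m ι κ R : Type*} [Fintype ι] [Fintype κ]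

theorem submatrix_id_mulVec_comp [NonUnitalNonAssocSemiring R] (a : Matrix m ι R) {c : κ → ι}
    (hc : Injective c) {v : ι → R} (hv : ∀ j ∉ Set.range c, v j = 0) :
    a.submatrix id c *ᵥ (v ∘ c) = a *ᵥ v := by
  ext x
  exact Fintype.sum_of_injective c hc _ _ (fun j hj ↦ by rw [hv j hj, mul_zero]) fun _ ↦ rfl

variable [CommRing R] [NoZeroDivisors R] [Fintype m] [DecidableEq m]

theorem eq_zero_of_mulVec_eq_zero_of_support_subset_range (a : Matrix m ι R) {c : m → ι}
    (hc : Injective c) (hdet : (a.submatrix id c).det ≠ 0) {v : ι → R}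
    (hvc : ∀ j ∉ Set.range c, v j = 0) (hv : a *ᵥ v = 0) : v = 0 := by
  have hvc_zero : v ∘ c = 0 :=
    eq_zero_of_mulVec_eq_zero hdet (by rw [submatrix_id_mulVec_comp a hc hvc, hv])
  ext j
  by_cases hj : j ∈ Set.range c
  · obtain ⟨t, rfl⟩ := hj
    exact congrFun hvc_zero t
  · exact hvc j hj

theorem eq_zero_of_mulVec_eq_zero_of_card_support_le (a : Matrix m ι R)
    (ha : ∀ c : m → ι, Injective c → (a.submatrix id c).det ≠ 0)
    (hmι : Fintype.card m ≤ Fintype.card ι) {v : ι → R} {s : Finset ι}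
    (hs : #s ≤ Fintype.card m) (hvs : ∀ j ∉ s, v j = 0) (hv : a *ᵥ v = 0) : v = 0 := by
  obtain ⟨t, hst, ht⟩ := exists_superset_card_eq hs hmι
  let e : m ≃ t := Fintype.equivOfCardEq (by simp [ht])
  have hc : Injective (Subtype.val ∘ e) := Subtype.val_injective.comp e.injective
  refine a.eq_zero_of_mulVec_eq_zero_of_support_subset_range hc (ha _ hc) (fun j hj ↦ hvs j ?_) hv
  intro hjs
  exact hj ⟨e.symm ⟨j, hst hjs⟩, by simp⟩

end Matrix

def thooftDiagonal (R : Type*) [CommRing R] (n k : ℕ) (i : Fin (n + 1)) :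
    Matrix (Fin (n + k)) (Fin (n + k)) R :=
  diagonal fun j : Fin (n + k) => if (j : ℕ) = (i : ℕ) ∨ n + 1 ≤ (j : ℕ) then (1 : R) else 0

section thooftDiagonal

variable {R : Type*} [CommRing R] {n k : ℕ}

theorem thooftDiagonal_mulVec_apply (i : Fin (n + 1)) (w : Fin (n + k) → R) (j : Fin (n + k)) :
    (thooftDiagonal R n k i *ᵥ w) j = if (j : ℕ) = i ∨ n < j then w j else 0 := by
  simp [thooftDiagonal, mulVec_diagonal]

variable [NoZeroDivisors R] {a : Matrix (Fin k) (Fin (n + k)) R}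

theorem apply_eq_zero_of_mulVec_thooftDiagonal_mulVec_eq_zero
    (ha : ∀ c : Fin k → Fin (n + k), Injective c → (a.submatrix id c).det ≠ 0)
    (hk : 0 < k) {i : Fin (n + 1)} {w : Fin (n + k) → R}
    (hw : a *ᵥ thooftDiagonal R n k i *ᵥ w = 0) {j : Fin (n + k)}
    (hj : (j : ℕ) = i ∨ n < j) : w j = 0 := by
  let s : Finset (Fin (n + k)) := insert ⟨i, by omega⟩ (Ioi ⟨n, by omega⟩)
  have hs : #s ≤ Fintype.card (Fin k) := by
    refine (card_insert_le _ _).trans ?_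
    simp only [Fin.card_Ioi, Fintype.card_fin]
    omega
  have hws : ∀ j ∉ s, (thooftDiagonal R n k i *ᵥ w) j = 0 := by
    intro j hj
    rw [thooftDiagonal_mulVec_apply, if_neg]
    simpa [s, Fin.ext_iff, Fin.lt_def] using hj
  have := congrFun (a.eq_zero_of_mulVec_eq_zero_of_card_support_le ha (by simp) hs hws hw) j
  rwa [thooftDiagonal_mulVec_apply, if_pos hj] at this

theorem apply_eq_zero_of_mulVec_thooftDiagonal_mulVec_add_eq_zero
    (ha : ∀ c : Fin k → Fin (n + k), Injective c → (a.submatrix id c).det ≠ 0) (hk : 2 ≤ k)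
    {i i' : Fin (n + 1)} (hii' : i ≠ i') {x y : Fin (n + k) → R}
    (hx : a *ᵥ thooftDiagonal R n k i *ᵥ x = 0) (hy : a *ᵥ thooftDiagonal R n k i' *ᵥ y = 0)
    (hxy : a *ᵥ (thooftDiagonal R n k i *ᵥ y + thooftDiagonal R n k i' *ᵥ x) = 0)
    {j : Fin (n + k)} (hj : (j : ℕ) = i) : y j = 0 := by
  let s : Finset (Fin (n + k)) := {⟨i, by omega⟩, ⟨i', by omega⟩}
  have hs : #s ≤ Fintype.card (Fin k) := card_le_two.trans (by simpa using hk)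
  -- both `x` and `y` vanish on the tail, so the sum is supported on `s`
  have hxys : ∀ j ∉ s, (thooftDiagonal R n k i *ᵥ y + thooftDiagonal R n k i' *ᵥ x) j = 0 := by
    intro j hj
    by_cases htail : n < (j : ℕ)
    · simp [thooftDiagonal_mulVec_apply, htail,
        apply_eq_zero_of_mulVec_thooftDiagonal_mulVec_eq_zero ha (by omega) hx (.inr htail),
        apply_eq_zero_of_mulVec_thooftDiagonal_mulVec_eq_zero ha (by omega) hy (.inr htail)]
    · simp only [s, mem_insert, mem_singleton, Fin.ext_iff, not_or] at hj
      simp [thooftDiagonal_mulVec_apply, hj, htail]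
  have := congrFun (a.eq_zero_of_mulVec_eq_zero_of_card_support_le ha (by simp) hs hxys hxy) j
  simpa [thooftDiagonal_mulVec_apply, hj, Fin.val_ne_of_ne hii', i.is_le.not_gt] using this

end thooftDiagonal

/-- Let `k ≥ 2` and let `a` be a `k × (n+k)` complex matrix all of whose
`k × k` minors are nonzero. With `Dᵢ` the diagonal matrix having `1` in position `i` and
in positions `n+1, …, n+k-1` (0-indexed) and `0` elsewhere, the only tuple
`(b₀, …, bₙ)` of vectors of `ℂ^{n+k}` satisfying `a Dᵢ bᵢ = 0` for all `i` and
`a (D_{i₁} b_{i₂} + D_{i₂} b_{i₁}) = 0` for all `i₁ < i₂` is the zero tuple. -/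
theorem thooft_diagonal_system_trivial_solution (n k : ℕ) (hk : 2 ≤ k)
    (a : Matrix (Fin k) (Fin (n + k)) ℂ)
    (ha : ∀ c : Fin k → Fin (n + k), Function.Injective c → (a.submatrix id c).det ≠ 0)
    (D : Fin (n + 1) → Matrix (Fin (n + k)) (Fin (n + k)) ℂ)
    (hD : ∀ i, D i = Matrix.diagonal fun j : Fin (n + k) =>
      if (j : ℕ) = (i : ℕ) ∨ n + 1 ≤ (j : ℕ) then (1 : ℂ) else 0)
    (b : Fin (n + 1) → Fin (n + k) → ℂ)
    (h1 : ∀ i, a.mulVec ((D i).mulVec (b i)) = 0)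
    (h2 : ∀ i₁ i₂ : Fin (n + 1), i₁ < i₂ →
      a.mulVec ((D i₁).mulVec (b i₂) + (D i₂).mulVec (b i₁)) = 0) :
    b = 0 := by
  obtain rfl : D = thooftDiagonal ℂ n k := funext hD
  ext i j
  by_cases hj : (j : ℕ) = i ∨ n < j
  · exact apply_eq_zero_of_mulVec_thooftDiagonal_mulVec_eq_zero ha (by omega) (h1 i) hj
  rw [not_or, not_lt] at hj
  let j' : Fin (n + 1) := ⟨j, by omega⟩
  have hj'i : j' ≠ i := fun h ↦ hj.1 (congrArg Fin.val h)
  rcases hj'i.lt_or_gt with h | h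
  · exact apply_eq_zero_of_mulVec_thooftDiagonal_mulVec_add_eq_zero ha hk h.ne (h1 j') (h1 i)
      (h2 j' i h) rfl
  · exact apply_eq_zero_of_mulVec_thooftDiagonal_mulVec_add_eq_zero ha hk h.ne' (h1 j') (h1 i)
      (by rw [add_comm (thooftDiagonal ℂ n k j' *ᵥ b i)]; exact h2 i j' h) rfl
end
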